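/- arXiv:1703.04144 — 6 statements merged into one kernel-verified Lean document; each statement's English description precedes it below -/
import Mathlib

section
/- Let p : [0,∞) → [0,∞) be continuous, τ continuous with τ(t) < t, τ(t) → ∞, and h(t) = sup_{0 ≤ s ≤ t} τ(s). Then liminf_{t→∞} ∫_{h(t)}^t p(s) ds = liminf_{t→∞} ∫_{τ(t)}^t p(s) ds. -/
/-!
Since `τ ≤ h ≤ t` eventually and `p ≥ 0`, the `h`-integrals are eventually below the
`τ`-integrals. Conversely `h t = τ x` for a maximiser `x ∈ [0, t]` of `τ`, so the `h`-integral
at `t` dominates the `τ`-integral at `x`, and `x ≥ τ x ≥ τ t → ∞`. Thus every eventual lower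
bound of either family is one of the other.
-/

open Real Filter intervalIntegral

theorem Filter.liminf_atTop_eq_of_eventually_le_of_exists_le {α β : Type*} [Nonempty α]
    [SemilatticeSup α] [ConditionallyCompleteLattice β] {f g : α → β}
    (hle : ∀ᶠ t in atTop, g t ≤ f t) (hge : ∀ S, ∀ᶠ t in atTop, ∃ x ≥ S, f x ≤ g t) :
    liminf g atTop = liminf f atTop := by
  rw [liminf_eq, liminf_eq]
  congr 1
  ext a
  constructor
  · intro ha
    filter_upwards [ha, hle] with t hat hgf
    exact hat.trans hgf
  · intro ha
    obtain ⟨S, hS⟩ := eventually_atTop.1 ha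
    filter_upwards [hge S] with t ⟨x, hxS, hfg⟩
    exact (hS x hxS).trans hfg

/-- With `p ≥ 0` continuous, `τ(t) < t`, `τ(t) → ∞`, and
`h(t) = sup_{0 ≤ s ≤ t} τ(s)`, the liminfs of `∫_{h(t)}^t p` and
`∫_{τ(t)}^t p` as `t → ∞` coincide. -/
theorem stmt8 (p τ : ℝ → ℝ) (hpc : Continuous p)
    (hp : ∀ t, 0 ≤ t → 0 ≤ p t)
    (hτc : Continuous τ) (hτ : ∀ t, 0 ≤ t → τ t < t)
    (hτtop : Tendsto τ atTop atTop)
    (h : ℝ → ℝ) (hh : ∀ t, h t = sSup (τ '' Set.Icc 0 t)) :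
    liminf (fun t => ∫ s in h t..t, p s) atTop =
      liminf (fun t => ∫ s in τ t..t, p s) atTop := by
  have hmax : ∀ t, 0 ≤ t → ∃ x ∈ Set.Icc 0 t, h t = τ x ∧ τ t ≤ τ x := fun t ht => by
    obtain ⟨x, hx, hsup, hge⟩ :=
      isCompact_Icc.exists_sSup_image_eq_and_ge (Set.nonempty_Icc.2 ht) hτc.continuousOn
    exact ⟨x, hx, (hh t).trans hsup, hge t ⟨ht, le_rfl⟩⟩
  have hmono : ∀ {c a b d : ℝ}, 0 ≤ c → c ≤ a → a ≤ b → b ≤ d →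
      ∫ s in a..b, p s ≤ ∫ s in c..d, p s := fun hc hca hab hbd =>
    integral_mono_interval hca hab hbd
      (MeasureTheory.ae_restrict_of_forall_mem measurableSet_Ioc fun s hs => hp s (hc.trans hs.1.le))
      (hpc.intervalIntegrable _ _)
  apply liminf_atTop_eq_of_eventually_le_of_exists_le
  · filter_upwards [hτtop.eventually_ge_atTop 0, eventually_ge_atTop 0] with t hτ0 ht0
    obtain ⟨x, hx, hhx, hτx⟩ := hmax t ht0
    exact hmono hτ0 (hhx ▸ hτx) (hhx ▸ (hτ x hx.1).le.trans hx.2) le_rfl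
  · intro S
    filter_upwards [hτtop.eventually_ge_atTop (max S 0), eventually_ge_atTop 0]
      with t hτt ht0
    obtain ⟨x, hx, hhx, hτx⟩ := hmax t ht0
    have hτx_lb : max S 0 ≤ τ x := hτt.trans hτx
    have hxτx : τ x ≤ x := (hτ x hx.1).le
    refine ⟨x, (le_max_left S 0).trans (hτx_lb.trans hxτx), ?_⟩
    rw [hhx]
    exact hmono ((le_max_right S 0).trans hτx_lb) le_rfl hxτx hx.2
end

section
/- Suppose x is an eventually positive solution of x'(t) + Σ_{i=1}^m p_i(t) x(τ_i(t)) = 0, and suppose 0 < α := liminf_{t→∞} ∫_{τ(t)}^t Σ_i p_i(s) ds ≤ 1/e, where τ(t) = max_i τ_i(t). Let h(t) = max_i sup_{0≤s≤t} τ_i(s) and let λ₀ be the smaller root of λ = e^{αλ}. Then liminf_{t→∞} x(h(t))/x(t) ≥ λ₀. -/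
/-!
Since every `τᵢ(t) ≤ h(t)` and `x` is eventually decreasing, `x` solves the single-delay
inequality `x' + P(t) x(h(t)) ≤ 0` with `P = ∑ pᵢ`; and since `h(t) = τ(s)` for some
`s ∈ [h(t), t]`, eventually `∫_{h(t)}^t P ≥ α - ε`. Integrating `(log x)' ≤ -P · x(h)/x` over
`[h(t), t]` shows that `x(h(t))/x(t) ≥ L` eventually forces `x(h(t))/x(t) ≥ e^{(α-ε)L}` eventually,
so `w = liminf x(h(t))/x(t)` satisfies `e^{αw} ≤ w`, and the intermediate value theorem on `[0, w]`
yields a root of `λ = e^{αλ}` below `w`. The liminf is a genuine one (not the junk value of an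
unbounded set) because `x(h(t*))/x(t*) ≤ 4/α²` at the points `t*` that split `∫_{h(t)}^t P`
in halves.
-/

open Real Filter intervalIntegral Set MeasureTheory Topology

theorem integral_le_sub_of_hasDerivAt_of_le {f f' φ : ℝ → ℝ} {a b : ℝ} (hab : a ≤ b)
    (hf : ∀ s ∈ Icc a b, HasDerivAt f (f' s) s) (hφ : IntervalIntegrable φ volume a b)
    (hφf : ∀ s ∈ Icc a b, φ s ≤ f' s) : ∫ s in a..b, φ s ≤ f b - f a :=
  integral_le_sub_of_hasDeriv_right_of_le hab
    (fun s hs ↦ (hf s hs).continuousAt.continuousWithinAt)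
    (fun s hs ↦ (hf s (Ioo_subset_Icc_self hs)).hasDerivWithinAt)
    ((intervalIntegrable_iff_integrableOn_Icc_of_le hab).1 hφ)
    (fun s hs ↦ hφf s (Ioo_subset_Icc_self hs))

theorem exists_antitoneOn_Ici_of_hasDerivAt_nonpos {f f' : ℝ → ℝ}
    (hf : ∀ᶠ t in atTop, HasDerivAt f (f' t) t ∧ f' t ≤ 0) : ∃ T, AntitoneOn f (Ici T) := by
  obtain ⟨T, hT⟩ := eventually_atTop.1 hf
  refine ⟨T, antitoneOn_of_hasDerivWithinAt_nonpos (f' := f') (convex_Ici T)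
    (fun t ht ↦ (hT t ht).1.continuousAt.continuousWithinAt) (fun t ht ↦ ?_) fun t ht ↦ ?_⟩
  · rw [interior_Ici] at ht ⊢
    exact (hT t (le_of_lt ht)).1.hasDerivWithinAt
  · rw [interior_Ici] at ht
    exact (hT t (le_of_lt ht)).2

theorem le_of_exp_mul_le_self {α lam₀ w : ℝ}
    (hlam : IsLeast {lam : ℝ | 0 < lam ∧ lam = exp (α * lam)} lam₀) (hw : exp (α * w) ≤ w) :
    lam₀ ≤ w := by
  have hw0 : 0 ≤ w := (exp_pos _).le.trans hw
  obtain ⟨μ, hμ, hμ_eq⟩ : ∃ μ ∈ Icc 0 w, μ - exp (α * μ) = 0 :=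
    intermediate_value_Icc hw0 (by fun_prop : Continuous fun μ ↦ μ - exp (α * μ)).continuousOn
      ⟨by simp, by linarith⟩
  have hμ_fix : μ = exp (α * μ) := sub_eq_zero.1 hμ_eq
  exact (hlam.2 ⟨hμ_fix ▸ exp_pos _, hμ_fix⟩).trans hμ.2

theorem exp_mul_liminf_le_liminf {ι : Type*} {l : Filter ι} {r : ι → ℝ} {α : ℝ}
    (hr : ∀ᶠ t in l, 1 ≤ r t) (hcob : IsCoboundedUnder (· ≥ ·) l r)
    (hstep : ∀ L, 0 ≤ L → (∀ᶠ t in l, L ≤ r t) → ∀ c < α, ∀ᶠ t in l, exp (c * L) ≤ r t) :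
    exp (α * liminf r l) ≤ liminf r l := by
  set w := liminf r l
  have hw : 1 ≤ w := le_liminf_of_le hcob hr
  have hlim : Tendsto (fun δ ↦ exp ((α - δ) * (w - δ))) (𝓝[>] 0) (𝓝 (exp (α * w))) := by
    have h := (by fun_prop : Continuous fun δ : ℝ ↦ exp ((α - δ) * (w - δ))).tendsto 0
    simpa only [sub_zero] using h.mono_left nhdsWithin_le_nhds
  refine le_of_tendsto hlim ?_
  filter_upwards [Ioo_mem_nhdsGT one_pos] with δ ⟨hδ0, hδ1⟩
  have hbelow : ∀ᶠ t in l, w - δ ≤ r t :=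
    (eventually_lt_of_lt_liminf (by linarith) (isBoundedUnder_of_eventually_ge hr)).mono
      fun _ ↦ le_of_lt
  exact le_liminf_of_le hcob (hstep _ (by linarith) hbelow _ (by linarith))

structure IsPosSolDelayIneq (x x' P h : ℝ → ℝ) : Prop where
  eventually_pos : ∀ᶠ t in atTop, 0 < x t
  eventually_hasDerivAt : ∀ᶠ t in atTop, HasDerivAt x (x' t) t
  eventually_deriv_le : ∀ᶠ t in atTop, x' t ≤ -(P t * x (h t))
  eventually_coeff_nonneg : ∀ᶠ t in atTop, 0 ≤ P t
  continuous_coeff : Continuous P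
  tendsto_delay : Tendsto h atTop atTop
  eventually_delay_le : ∀ᶠ t in atTop, h t ≤ t
  eventually_delay_mono : ∀ᶠ s in atTop, ∀ t, s ≤ t → h s ≤ h t

namespace IsPosSolDelayIneq

variable {x x' P h : ℝ → ℝ}

theorem exists_antitoneOn (hx : IsPosSolDelayIneq x x' P h) : ∃ T, AntitoneOn x (Ici T) := by
  refine exists_antitoneOn_Ici_of_hasDerivAt_nonpos (f' := x') ?_
  filter_upwards [hx.eventually_hasDerivAt, hx.eventually_deriv_le, hx.eventually_coeff_nonneg,
    hx.tendsto_delay.eventually hx.eventually_pos] with t hd hle hP hxh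
  exact ⟨hd, hle.trans (neg_nonpos.2 (mul_nonneg hP hxh.le))⟩

theorem eventually_one_le_div (hx : IsPosSolDelayIneq x x' P h) :
    ∀ᶠ t in atTop, 1 ≤ x (h t) / x t := by
  obtain ⟨T, hanti⟩ := hx.exists_antitoneOn
  filter_upwards [hx.tendsto_delay.eventually_ge_atTop T, hx.eventually_delay_le,
    hx.eventually_pos] with t hT hle hpos
  exact (one_le_div hpos).2 (hanti hT (hT.trans hle) hle)

theorem eventually_integral_mul_le (hx : IsPosSolDelayIneq x x' P h) :
    ∀ᶠ a in atTop, ∀ b, a ≤ b → (∫ s in a..b, P s) * x (h b) ≤ x a := by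
  obtain ⟨T, hanti⟩ := hx.exists_antitoneOn
  have hgood := hx.eventually_hasDerivAt.and (hx.eventually_deriv_le.and
    (hx.eventually_coeff_nonneg.and ((hx.tendsto_delay.eventually_ge_atTop T).and
    hx.eventually_delay_mono)))
  filter_upwards [eventually_forall_ge_atTop.2 hgood,
    eventually_forall_ge_atTop.2 hx.eventually_pos] with a ha hpos b hab
  have hpt : ∀ s ∈ Icc a b, P s * x (h b) ≤ -x' s := fun s hs ↦ by
    obtain ⟨-, hle, hP, hT, hmono⟩ := ha s hs.1
    calc P s * x (h b) ≤ P s * x (h s) :=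
          mul_le_mul_of_nonneg_left (hanti hT (hT.trans (hmono b hs.2)) (hmono b hs.2)) hP
      _ ≤ -x' s := le_neg.1 hle
  have hint : ∫ s in a..b, P s * x (h b) ≤ -x b - -x a :=
    integral_le_sub_of_hasDerivAt_of_le hab (fun s hs ↦ (ha s hs.1).1.neg)
      ((hx.continuous_coeff.mul continuous_const).intervalIntegrable a b) hpt
  rw [intervalIntegral.integral_mul_const] at hint
  linarith [hpos b hab]

theorem frequently_div_le (hx : IsPosSolDelayIneq x x' P h) {c : ℝ} (hc0 : 0 < c)
    (hc : ∀ᶠ t in atTop, c ≤ ∫ s in h t..t, P s) :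
    ∃ᶠ t in atTop, x (h t) / x t ≤ 4 / c ^ 2 := by
  refine frequently_atTop.2 fun R ↦ ?_
  obtain ⟨t, hct, hle, hR, hbound⟩ := (hc.and (hx.eventually_delay_le.and
    ((hx.tendsto_delay.eventually_ge_atTop R).and (hx.tendsto_delay.eventually_forall_ge_atTop
    (hx.eventually_integral_mul_le.and hx.eventually_pos))))).exists
  obtain ⟨u, hu, hu_eq⟩ : ∃ u ∈ Icc (h t) t, ∫ s in h t..u, P s = c / 2 :=
    intermediate_value_Icc hle (continuous_primitive
      (hx.continuous_coeff.intervalIntegrable) (h t)).continuousOn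
      ⟨by simp only [integral_same]; positivity, by linarith⟩
  have hsplit : (∫ s in h t..u, P s) + ∫ s in u..t, P s = ∫ s in h t..t, P s :=
    integral_add_adjacent_intervals (hx.continuous_coeff.intervalIntegrable _ _)
      (hx.continuous_coeff.intervalIntegrable _ _)
  have hxu := (hbound u hu.1).2
  have hA : c / 2 * x (h t) ≤ x u := by
    refine le_trans ?_ ((hbound u hu.1).1 t hu.2)
    exact mul_le_mul_of_nonneg_right (by linarith) (hbound _ le_rfl).2.le
  have hB : c / 2 * x (h u) ≤ x (h t) := hu_eq ▸ (hbound _ le_rfl).1 u hu.1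
  refine ⟨u, hR.trans hu.1, ?_⟩
  rw [div_le_div_iff₀ hxu (by positivity)]
  nlinarith

theorem eventually_exp_mul_le_div (hx : IsPosSolDelayIneq x x' P h) {L c : ℝ} (hL : 0 ≤ L)
    (hLr : ∀ᶠ t in atTop, L ≤ x (h t) / x t) (hc : ∀ᶠ t in atTop, c ≤ ∫ s in h t..t, P s) :
    ∀ᶠ t in atTop, exp (c * L) ≤ x (h t) / x t := by
  have hgood := hLr.and (hx.eventually_hasDerivAt.and (hx.eventually_deriv_le.and
    (hx.eventually_coeff_nonneg.and (hx.eventually_pos.and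
    (hx.tendsto_delay.eventually hx.eventually_pos)))))
  filter_upwards [hc, hx.eventually_delay_le, hx.tendsto_delay.eventually_forall_ge_atTop hgood]
    with t hct hle hgood_t
  obtain ⟨-, -, -, -, hxt, hxht⟩ := hgood_t t hle
  have hpt : ∀ s ∈ Icc (h t) t, P s * L ≤ -(x' s / x s) := fun s hs ↦ by
    obtain ⟨hLs, -, hds, hPs, hxs, -⟩ := hgood_t s hs.1
    calc P s * L ≤ P s * (x (h s) / x s) := mul_le_mul_of_nonneg_left hLs hPs
      _ ≤ -(x' s / x s) := by
        rw [← mul_div_assoc, ← neg_div]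
        exact div_le_div_of_nonneg_right (le_neg.1 hds) hxs.le
  have hint : ∫ s in h t..t, P s * L ≤ -log (x t) - -log (x (h t)) :=
    integral_le_sub_of_hasDerivAt_of_le hle
      (fun s hs ↦ ((hgood_t s hs.1).2.1.log (hgood_t s hs.1).2.2.2.2.1.ne').neg)
      ((hx.continuous_coeff.mul continuous_const).intervalIntegrable _ _) hpt
  rw [intervalIntegral.integral_mul_const] at hint
  calc exp (c * L) ≤ exp (log (x (h t) / x t)) := by
        rw [log_div hxht.ne' hxt.ne']
        exact exp_le_exp.2 (by nlinarith)
    _ = x (h t) / x t := exp_log (div_pos hxht hxt)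

theorem exp_mul_liminf_div_le (hx : IsPosSolDelayIneq x x' P h) {α : ℝ} (hα : 0 < α)
    (hint : ∀ c < α, ∀ᶠ t in atTop, c ≤ ∫ s in h t..t, P s) :
    exp (α * liminf (fun t ↦ x (h t) / x t) atTop) ≤ liminf (fun t ↦ x (h t) / x t) atTop :=
  exp_mul_liminf_le_liminf hx.eventually_one_le_div
    (IsCoboundedUnder.of_frequently_le
      (hx.frequently_div_le (half_pos hα) (hint _ (half_lt_self hα))))
    fun _ hL hLr c hc ↦ hx.eventually_exp_mul_le_div hL hLr (hint c hc)

end IsPosSolDelayIneq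

noncomputable def runningMax {ι : Type*} (τ : ι → ℝ → ℝ) (t : ℝ) : ℝ := sSup (⋃ i, τ i '' Icc 0 t)

section runningMax

variable {ι : Type*} [Finite ι] {τ : ι → ℝ → ℝ}

theorem le_runningMax (hτc : ∀ i, Continuous (τ i)) (i : ι) {s t : ℝ} (hs : s ∈ Icc 0 t) :
    τ i s ≤ runningMax τ t :=
  le_csSup (isCompact_iUnion fun j ↦ isCompact_Icc.image (hτc j)).bddAbove
    (mem_iUnion.2 ⟨i, mem_image_of_mem _ hs⟩)

theorem exists_eq_runningMax [Nonempty ι] (hτc : ∀ i, Continuous (τ i)) {t : ℝ} (ht : 0 ≤ t) :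
    ∃ i, ∃ s ∈ Icc 0 t, τ i s = runningMax τ t := by
  have hne : (⋃ i, τ i '' Icc 0 t).Nonempty :=
    ⟨_, mem_iUnion.2 ⟨Classical.arbitrary ι, mem_image_of_mem _ (right_mem_Icc.2 ht)⟩⟩
  simpa only [runningMax, mem_iUnion, mem_image] using
    (isCompact_iUnion fun j ↦ isCompact_Icc.image (hτc j)).sSup_mem hne

theorem monotoneOn_runningMax [Nonempty ι] (hτc : ∀ i, Continuous (τ i)) :
    MonotoneOn (runningMax τ) (Ici 0) := fun s hs _ _ hst ↦ by
  obtain ⟨i, u, hu, hu_eq⟩ := exists_eq_runningMax hτc hs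
  exact hu_eq ▸ le_runningMax hτc i ⟨hu.1, hu.2.trans hst⟩

theorem tendsto_runningMax [Nonempty ι] (hτc : ∀ i, Continuous (τ i))
    (hτtop : ∀ i, Tendsto (τ i) atTop atTop) : Tendsto (runningMax τ) atTop atTop :=
  tendsto_atTop_mono' _ ((eventually_ge_atTop 0).mono fun _ ht ↦
    le_runningMax hτc (Classical.arbitrary ι) ⟨ht, le_rfl⟩) (hτtop _)

theorem exists_runningMax_eq_iSup [Nonempty ι] (hτc : ∀ i, Continuous (τ i))
    (hτ : ∀ i t, 0 ≤ t → τ i t < t) {t : ℝ} (ht : 0 ≤ t) :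
    ∃ s ∈ Icc (runningMax τ t) t, runningMax τ t = ⨆ i, τ i s := by
  obtain ⟨j, s, hs, hjs⟩ := exists_eq_runningMax hτc ht
  refine ⟨s, ⟨hjs ▸ (hτ j s hs.1).le, hs.2⟩, le_antisymm ?_ ?_⟩
  · exact hjs ▸ le_ciSup (f := fun i ↦ τ i s) (Set.finite_range _).bddAbove j
  · exact ciSup_le fun i ↦ le_runningMax hτc i hs

end runningMax

section MultipleDelays

variable {ι : Type*} [Fintype ι] [Nonempty ι] {p τ : ι → ℝ → ℝ}

theorem isPosSolDelayIneq_runningMax {x : ℝ → ℝ} (hp : ∀ᶠ t in atTop, ∀ i, 0 ≤ p i t)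
    (hpc : ∀ i, Continuous (p i)) (hτ : ∀ i t, 0 ≤ t → τ i t < t)
    (hτc : ∀ i, Continuous (τ i)) (hτtop : ∀ i, Tendsto (τ i) atTop atTop)
    (hsol : ∀ᶠ t in atTop, HasDerivAt x (-(∑ i, p i t * x (τ i t))) t)
    (hpos : ∀ᶠ t in atTop, 0 < x t) :
    IsPosSolDelayIneq x (fun t ↦ -(∑ i, p i t * x (τ i t))) (fun t ↦ ∑ i, p i t)
      (runningMax τ) := by
  have hτpos : ∀ᶠ t in atTop, ∀ i, 0 < x (τ i t) :=
    eventually_all.2 fun i ↦ (hτtop i).eventually hpos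
  obtain ⟨T, hanti⟩ := exists_antitoneOn_Ici_of_hasDerivAt_nonpos <| by
    filter_upwards [hsol, hp, hτpos] with t hd hpt hxτ
    exact ⟨hd, neg_nonpos.2 (Finset.sum_nonneg fun i _ ↦ mul_nonneg (hpt i) (hxτ i).le)⟩
  refine ⟨hpos, hsol, ?_, hp.mono fun t ht ↦ Finset.sum_nonneg fun i _ ↦ ht i,
    continuous_finsetSum _ fun i _ ↦ hpc i, tendsto_runningMax hτc hτtop,
    (eventually_ge_atTop 0).mono fun t ht ↦
      let ⟨i, s, hs, hs_eq⟩ := exists_eq_runningMax hτc ht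
      hs_eq ▸ (hτ i s hs.1).le.trans hs.2,
    (eventually_ge_atTop 0).mono fun s hs t hst ↦ monotoneOn_runningMax hτc hs (hs.trans hst) hst⟩
  filter_upwards [hp, eventually_ge_atTop 0,
    eventually_all.2 fun i ↦ (hτtop i).eventually_ge_atTop T] with t hpt ht hτT
  rw [neg_le_neg_iff, Finset.sum_mul]
  refine Finset.sum_le_sum fun i _ ↦ mul_le_mul_of_nonneg_left ?_ (hpt i)
  have hτh : τ i t ≤ runningMax τ t := le_runningMax hτc i ⟨ht, le_rfl⟩
  exact hanti (hτT i) ((hτT i).trans hτh) hτh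

theorem eventually_le_integral_runningMax (hτ : ∀ i t, 0 ≤ t → τ i t < t)
    (hτc : ∀ i, Continuous (τ i)) (hτtop : ∀ i, Tendsto (τ i) atTop atTop) {P : ℝ → ℝ}
    (hPc : Continuous P) (hP : ∀ᶠ t in atTop, 0 ≤ P t) {c : ℝ}
    (hc : c < liminf (fun t ↦ ∫ s in (⨆ i, τ i t)..t, P s) atTop) :
    ∀ᶠ t in atTop, c ≤ ∫ s in runningMax τ t..t, P s := by
  have hPi : ∀ a b, IntervalIntegrable P volume a b := hPc.intervalIntegrable
  have hτmax : ∀ t, 0 ≤ t → (⨆ i, τ i t) ≤ t := fun t ht ↦ ciSup_le fun i ↦ (hτ i t ht).le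
  have hτmax_top : Tendsto (fun t ↦ ⨆ i, τ i t) atTop atTop :=
    tendsto_atTop_mono (fun t ↦ le_ciSup (f := fun i ↦ τ i t) (Set.finite_range _).bddAbove
      (Classical.arbitrary ι)) (hτtop _)
  have hbdd : ∀ᶠ t in atTop, 0 ≤ ∫ s in (⨆ i, τ i t)..t, P s := by
    filter_upwards [hτmax_top.eventually_forall_ge_atTop hP, eventually_ge_atTop 0]
      with t hPt ht
    exact integral_nonneg (hτmax t ht) fun s hs ↦ hPt s hs.1
  have hσ := eventually_lt_of_lt_liminf hc (isBoundedUnder_of_eventually_ge hbdd)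
  filter_upwards [eventually_ge_atTop 0,
    (tendsto_runningMax hτc hτtop).eventually_forall_ge_atTop (hσ.and hP)] with t ht hbig
  obtain ⟨s, hs, hs_eq⟩ := exists_runningMax_eq_iSup hτc hτ ht
  calc c ≤ ∫ u in runningMax τ t..s, P u := hs_eq ▸ (hbig s hs.1).1.le
    _ ≤ (∫ u in runningMax τ t..s, P u) + ∫ u in s..t, P u :=
        le_add_of_nonneg_right (integral_nonneg hs.2 fun u hu ↦ (hbig u (hs.1.trans hu.1)).2)
    _ = ∫ u in runningMax τ t..t, P u := integral_add_adjacent_intervals (hPi _ _) (hPi _ _)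

end MultipleDelays

theorem stmt9_general (m : ℕ) (hm : 1 ≤ m) (p τ : Fin m → ℝ → ℝ)
    (hp : ∀ i t, 0 ≤ t → 0 ≤ p i t) (hpc : ∀ i, Continuous (p i))
    (hτ : ∀ i t, 0 ≤ t → τ i t < t) (hτc : ∀ i, Continuous (τ i))
    (hτtop : ∀ i, Tendsto (τ i) atTop atTop)
    (τmax : ℝ → ℝ) (hτmax : ∀ t, τmax t = ⨆ i, τ i t)
    (h : ℝ → ℝ)
    (hh : ∀ t, h t = sSup {y : ℝ | ∃ i : Fin m, ∃ s, 0 ≤ s ∧ s ≤ t ∧ y = τ i s})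
    (x : ℝ → ℝ) (T₀ : ℝ)
    (hsol : ∀ t, T₀ ≤ t → HasDerivAt x (-(∑ i, p i t * x (τ i t))) t)
    (hpos : ∃ T, T₀ ≤ T ∧ ∀ t, T ≤ t → 0 < x t ∧ ∀ i, 0 < x (τ i t))
    (α : ℝ)
    (hα : α = liminf (fun t => ∫ s in τmax t..t, ∑ i, p i s) atTop)
    (hα0 : 0 < α)
    (lam₀ : ℝ)
    (hlam : IsLeast {lam : ℝ | 0 < lam ∧ lam = Real.exp (α * lam)} lam₀) :
    lam₀ ≤ liminf (fun t => x (h t) / x t) atTop := by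
  have : Nonempty (Fin m) := ⟨⟨0, hm⟩⟩
  obtain rfl : h = runningMax τ := funext fun t ↦ by
    rw [hh, runningMax]
    congr 1
    ext y
    simp [eq_comm, and_assoc]
  obtain rfl : τmax = fun t ↦ ⨆ i, τ i t := funext hτmax
  obtain ⟨T, -, hT⟩ := hpos
  have hp' : ∀ᶠ t in atTop, ∀ i, 0 ≤ p i t := (eventually_ge_atTop 0).mono fun t ht i ↦ hp i t ht
  have hx := isPosSolDelayIneq_runningMax hp' hpc hτ hτc hτtop
    ((eventually_ge_atTop T₀).mono hsol) ((eventually_ge_atTop T).mono fun t ht ↦ (hT t ht).1)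
  refine le_of_exp_mul_le_self hlam (hx.exp_mul_liminf_div_le hα0 fun c hc ↦ ?_)
  exact eventually_le_integral_runningMax hτ hτc hτtop hx.continuous_coeff
    hx.eventually_coeff_nonneg (hα ▸ hc)

/-- If `x` is an eventually positive solution of
`x'(t) + ∑ pᵢ(t) x(τᵢ(t)) = 0`, `0 < α := liminf ∫_{τ(t)}^t ∑ pᵢ ≤ 1/e`
with `τ(t) = maxᵢ τᵢ(t)`, `h(t) = maxᵢ sup_{0≤s≤t} τᵢ(s)`, and `λ₀` the
smaller root of `λ = e^{αλ}`, then `liminf x(h(t))/x(t) ≥ λ₀`. -/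
theorem stmt9 (m : ℕ) (hm : 1 ≤ m) (p τ : Fin m → ℝ → ℝ)
    (hp : ∀ i t, 0 ≤ t → 0 ≤ p i t) (hpc : ∀ i, Continuous (p i))
    (hτ : ∀ i t, 0 ≤ t → τ i t < t) (hτc : ∀ i, Continuous (τ i))
    (hτtop : ∀ i, Tendsto (τ i) atTop atTop)
    (τmax : ℝ → ℝ) (hτmax : ∀ t, τmax t = ⨆ i, τ i t)
    (h : ℝ → ℝ)
    (hh : ∀ t, h t = sSup {y : ℝ | ∃ i : Fin m, ∃ s, 0 ≤ s ∧ s ≤ t ∧ y = τ i s})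
    (x : ℝ → ℝ) (T₀ : ℝ) (hT₀ : 0 ≤ T₀)
    (hsol : ∀ t, T₀ ≤ t → HasDerivAt x (-(∑ i, p i t * x (τ i t))) t)
    (hpos : ∃ T, T₀ ≤ T ∧ ∀ t, T ≤ t → 0 < x t ∧ ∀ i, 0 < x (τ i t))
    (α : ℝ)
    (hα : α = liminf (fun t => ∫ s in τmax t..t, ∑ i, p i s) atTop)
    (hα0 : 0 < α) (hα1 : α ≤ 1 / Real.exp 1)
    (lam₀ : ℝ)
    (hlam : IsLeast {lam : ℝ | 0 < lam ∧ lam = Real.exp (α * lam)} lam₀) :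
    lam₀ ≤ liminf (fun t => x (h t) / x t) atTop :=
  stmt9_general m hm p τ hp hpc hτ hτc hτtop τmax hτmax h hh x T₀ hsol hpos α hα hα0 lam₀ hlam
end

section
/- Suppose x is a positive nonincreasing solution of x'(t) + Σ_i p_i(t) x(τ_i(t)) = 0 and x(h(ζ))/x(ζ) > μ for all ζ ∈ [h(t), t*], where μ > 1 and x(τ_i(ζ)) ≥ x(h(ζ)) a_r(h(ζ), τ_i(ζ)). Then ∫_{h(t)}^{t*} Σ_i p_i(ζ) a_r(h(ζ), τ_i(ζ)) dζ ≤ (1/μ) ln( x(h(t))/x(t*) ). -/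
/-!
Dividing the equation by `x` gives `-(log x)' = ∑ pᵢ x(τᵢ) / x`. On `[h(t), t*]` the hypotheses give
`x(τᵢ(ζ)) ≥ x(h(ζ)) a_r(h(ζ), τᵢ(ζ))` and `x(h(ζ)) > μ x(ζ)`, so the integrand is at most
`(1/μ) ∑ pᵢ x(τᵢ) / x` (where it is negative, because `x' ≤ 0`), whose integral is
`(1/μ) log (x(h(t)) / x(t*))`.
-/

open Real Filter intervalIntegral Set MeasureTheory

lemma HasDerivAt.nonpos_of_antitoneOn_Ici {f : ℝ → ℝ} {f' a x : ℝ} (hd : HasDerivAt f f' x)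
    (hf : AntitoneOn f (Ici a)) (hx : a ≤ x) : f' ≤ 0 := by
  have hacc : AccPt x (𝓟 (Ioi x)) := by
    rw [accPt_principal_iff_nhdsWithin, sdiff_singleton_eq_self self_notMem_Ioi]
    infer_instance
  exact hd.hasDerivWithinAt.nonpos_of_antitoneOn hacc
    (hf.mono fun y hy => hx.trans (le_of_lt hy))

lemma integral_le_log_div_of_mul_le_neg_deriv {f f' φ : ℝ → ℝ} {a b : ℝ} (hab : a ≤ b)
    (hpos : ∀ ζ ∈ Icc a b, 0 < f ζ) (hcont : ContinuousOn f (Icc a b))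
    (hderiv : ∀ ζ ∈ Ioo a b, HasDerivAt f (f' ζ) ζ) (hφ : IntervalIntegrable φ volume a b)
    (hle : ∀ ζ ∈ Ioo a b, φ ζ * f ζ ≤ -f' ζ) :
    ∫ ζ in a..b, φ ζ ≤ log (f a / f b) := by
  have hfa := hpos a (left_mem_Icc.mpr hab)
  have hfb := hpos b (right_mem_Icc.mpr hab)
  have hlog_cont : ContinuousOn (fun ζ => -log (f ζ)) (Icc a b) :=
    (hcont.log fun ζ hζ => (hpos ζ hζ).ne').neg
  have hlog_deriv : ∀ ζ ∈ Ioo a b,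
      HasDerivWithinAt (fun ζ => -log (f ζ)) (-(f' ζ / f ζ)) (Ioi ζ) ζ := fun ζ hζ =>
    ((hderiv ζ hζ).log (hpos ζ (Ioo_subset_Icc_self hζ)).ne').neg.hasDerivWithinAt
  have hφ_le : ∀ ζ ∈ Ioo a b, φ ζ ≤ -(f' ζ / f ζ) := fun ζ hζ => by
    rw [← neg_div, le_div_iff₀ (hpos ζ (Ioo_subset_Icc_self hζ))]
    exact hle ζ hζ
  calc ∫ ζ in a..b, φ ζ ≤ -log (f b) - -log (f a) :=
        integral_le_sub_of_hasDeriv_right_of_le hab hlog_cont hlog_deriv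
          ((intervalIntegrable_iff_integrableOn_Icc_of_le hab).mp hφ) hφ_le
    _ = log (f a / f b) := by rw [log_div hfa.ne' hfb.ne']; ring

lemma Finset.mul_sum_mul_le_sum_mul {ι : Type*} (s : Finset ι) {p y z : ι → ℝ} {c : ℝ}
    (hp : ∀ i ∈ s, 0 ≤ p i) (hyz : ∀ i ∈ s, c * y i ≤ z i) :
    c * ∑ i ∈ s, p i * y i ≤ ∑ i ∈ s, p i * z i := by
  rw [Finset.mul_sum]
  refine Finset.sum_le_sum fun i hi => ?_
  nlinarith [hyz i hi, hp i hi]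

lemma mul_le_of_le_of_mul_le {u v w d : ℝ} (hu : 0 ≤ u) (huv : u ≤ v) (hvw : v * w ≤ d)
    (hd : 0 ≤ d) : u * w ≤ d := by
  rcases le_or_gt w 0 with hw | hw
  · exact (mul_nonpos_of_nonneg_of_nonpos hu hw).trans hd
  · exact (mul_le_mul_of_nonneg_right huv hw.le).trans hvw

theorem stmt12_general (m : ℕ) (p τ : Fin m → ℝ → ℝ)
    (hp : ∀ i t, 0 ≤ t → 0 ≤ p i t)
    (x : ℝ → ℝ) (t₁ : ℝ) (ht₁ : 0 ≤ t₁)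
    (hxpos : ∀ t, t₁ ≤ t → 0 < x t)
    (hxanti : AntitoneOn x (Set.Ici t₁))
    (hsol : ∀ t, t₁ ≤ t → HasDerivAt x (-(∑ i, p i t * x (τ i t))) t)
    (a : ℝ → ℝ → ℝ) (h : ℝ → ℝ) (t tstar : ℝ) (μ : ℝ) (hμ : 1 < μ)
    (h1 : t₁ ≤ h t) (h2 : h t ≤ tstar)
    (hratio : ∀ ζ, h t ≤ ζ → ζ ≤ tstar → μ < x (h ζ) / x ζ)
    (hlow : ∀ i ζ, h t ≤ ζ → ζ ≤ tstar →
      x (h ζ) * a (h ζ) (τ i ζ) ≤ x (τ i ζ)) :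
    ∫ ζ in h t..tstar, ∑ i, p i ζ * a (h ζ) (τ i ζ) ≤
      (1 / μ) * Real.log (x (h t) / x tstar) := by
  set S := fun ζ => ∑ i, p i ζ * a (h ζ) (τ i ζ)
  have hμ0 : 0 < μ := one_pos.trans hμ
  have hx : ∀ ζ ∈ Icc (h t) tstar, t₁ ≤ ζ := fun ζ hζ => h1.trans hζ.1
  by_cases hS : IntervalIntegrable S volume (h t) tstar
  swap
  · rw [integral_undef hS]
    have := hxanti (hx _ (left_mem_Icc.mpr h2)) (hx _ (right_mem_Icc.mpr h2)) h2
    exact mul_nonneg (by positivity) (log_nonneg ((one_le_div (hxpos _ (h1.trans h2))).mpr this))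
  have hpoint : ∀ ζ ∈ Ioo (h t) tstar, μ * S ζ * x ζ ≤ ∑ i, p i ζ * x (τ i ζ) := by
    intro ζ hζ
    have hζ₁ := hx ζ (Ioo_subset_Icc_self hζ)
    have hD : 0 ≤ ∑ i, p i ζ * x (τ i ζ) :=
      neg_nonpos.mp ((hsol ζ hζ₁).nonpos_of_antitoneOn_Ici hxanti hζ₁)
    have hμx : μ * x ζ ≤ x (h ζ) :=
      ((lt_div_iff₀ (hxpos ζ hζ₁)).mp (hratio ζ hζ.1.le hζ.2.le)).le
    rw [mul_right_comm]
    exact mul_le_of_le_of_mul_le (mul_nonneg hμ0.le (hxpos ζ hζ₁).le) hμx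
      (Finset.mul_sum_mul_le_sum_mul _ (fun i _ => hp i ζ (ht₁.trans hζ₁))
        (fun i _ => hlow i ζ hζ.1.le hζ.2.le)) hD
  have hlog := integral_le_log_div_of_mul_le_neg_deriv h2 (fun ζ hζ => hxpos ζ (hx ζ hζ))
    (fun ζ hζ => (hsol ζ (hx ζ hζ)).continuousAt.continuousWithinAt)
    (fun ζ hζ => hsol ζ (hx ζ (Ioo_subset_Icc_self hζ))) (hS.const_mul μ)
    (fun ζ hζ => by simpa only [neg_neg] using hpoint ζ hζ)
  rw [intervalIntegral.integral_const_mul] at hlog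
  rw [one_div, ← div_eq_inv_mul, le_div_iff₀ hμ0, mul_comm]
  exact hlog

/-- If `x` is a positive nonincreasing solution of the delay
equation with `x(h(ζ))/x(ζ) > μ` on `[h(t), t*]` for some `μ > 1`, and
`x(τᵢ(ζ)) ≥ x(h(ζ)) a_r(h(ζ), τᵢ(ζ))` there, then
`∫_{h(t)}^{t*} ∑ pᵢ(ζ) a_r(h(ζ), τᵢ(ζ)) dζ ≤ (1/μ) ln (x(h(t))/x(t*))`. -/
theorem stmt12 (m : ℕ) (hm : 1 ≤ m) (p τ : Fin m → ℝ → ℝ)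
    (hp : ∀ i t, 0 ≤ t → 0 ≤ p i t) (hpc : ∀ i, Continuous (p i))
    (hτ : ∀ i t, 0 ≤ t → τ i t < t) (hτc : ∀ i, Continuous (τ i))
    (x : ℝ → ℝ) (t₁ : ℝ) (ht₁ : 0 ≤ t₁)
    (hxpos : ∀ t, t₁ ≤ t → 0 < x t)
    (hxanti : AntitoneOn x (Set.Ici t₁))
    (hsol : ∀ t, t₁ ≤ t → HasDerivAt x (-(∑ i, p i t * x (τ i t))) t)
    (a : ℝ → ℝ → ℝ) (h : ℝ → ℝ) (t tstar : ℝ) (μ : ℝ) (hμ : 1 < μ)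
    (h1 : t₁ ≤ h t) (h2 : h t ≤ tstar) (h3 : tstar ≤ t)
    (hratio : ∀ ζ, h t ≤ ζ → ζ ≤ tstar → μ < x (h ζ) / x ζ)
    (hlow : ∀ i ζ, h t ≤ ζ → ζ ≤ tstar →
      x (h ζ) * a (h ζ) (τ i ζ) ≤ x (τ i ζ)) :
    ∫ ζ in h t..tstar, ∑ i, p i ζ * a (h ζ) (τ i ζ) ≤
      (1 / μ) * Real.log (x (h t) / x tstar) :=
  stmt12_general m p τ hp x t₁ ht₁ hxpos hxanti hsol a h t tstar μ hμ h1 h2 hratio hlow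
end

section
/- Assume p_i ≥ 0 continuous, τ_i(t) < t, τ_i(t) → ∞, let h(t) = max_i sup_{0≤s≤t} τ_i(s), a_r the iterated exponential functionals, and assume 0 < α := liminf_{t→∞} ∫_{h(t)}^t Σ_i p_i(s) ds ≤ 1/e with λ₀ the smaller root of λ = e^{αλ}. If for some r ∈ ℕ, limsup_{t→∞} ∫_{h(t)}^t Σ_i p_i(ζ) a_r(h(ζ), τ_i(ζ)) dζ > (1 + ln λ₀)/λ₀, then every solution of x'(t) + Σ_i p_i(t) x(τ_i(t)) = 0 oscillates. -/
/-!
Suppose a solution `x` is eventually positive (otherwise pass to `-x`). Then `x` is eventually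
nonincreasing, and comparing `(log x)'` with the equation on `[u, v]` gives
`a_r(v, u) x(v) ≤ x(u)` for all large `u ≤ v`. Every `μ < λ₀` satisfies `μ < e^{αμ}`, and the
`∑ pᵢ`-mass of `[h(t), t]` is eventually close to `α`, so iterating the same comparison on
`[h(t), t]` pushes the ratio `x(h(t)) / x(t)` past any `λ < λ₀`.

Fix such a `λ > 1` with `(1 + ln λ)/λ` still below the limsup, and let
`G(ζ) = ∑ pᵢ(ζ) a_r(h(ζ), τᵢ(ζ))`. If `G` had mass more than `(1 + ln λ)/λ` on `[h(t), t]`, cut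
it at the point `c` leaving mass `1/λ` on `[c, t]`. Integrating the equation over `[c, t]` gives
`x(h(t)) ≤ λ (x(c) - x(t))`, while on `[h(t), c]` the mass exceeds `ln λ / λ`, so `x` drops by a
factor larger than `λ` there: `λ x(c) < x(h(t))`. This contradicts `x(t) > 0`, so the limsup is at
most `(1 + ln λ)/λ`.
-/

open Real Filter intervalIntegral
open MeasureTheory (volume)
open Set Topology

theorem continuous_intervalIntegral_bounds {q : ℝ → ℝ} (hq : Continuous q) :
    Continuous fun z : ℝ × ℝ => ∫ s in z.2..z.1, q s := by
  have hprim := continuous_primitive (μ := volume) (fun a b => hq.intervalIntegrable a b) 0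
  refine ((hprim.comp continuous_fst).sub (hprim.comp continuous_snd)).congr fun z => ?_
  exact integral_interval_sub_left (hq.intervalIntegrable _ _) (hq.intervalIntegrable _ _)

theorem exp_integral_mul_le_of_hasDerivAt {x x' g : ℝ → ℝ} {u v : ℝ} (huv : u ≤ v)
    (hx : ∀ s ∈ Icc u v, HasDerivAt x (x' s) s) (hpos : ∀ s ∈ Icc u v, 0 < x s)
    (hg : IntervalIntegrable g volume u v) (hle : ∀ s ∈ Icc u v, x' s ≤ -(g s * x s)) :
    exp (∫ s in u..v, g s) * x v ≤ x u := by
  have hlog : log (x v) - log (x u) ≤ ∫ s in u..v, -g s :=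
    sub_le_integral_of_hasDeriv_right_of_le huv
      (fun s hs => ((hx s hs).log (hpos s hs).ne').continuousAt.continuousWithinAt)
      (fun s hs => ((hx s (Ioo_subset_Icc_self hs)).log
        (hpos s (Ioo_subset_Icc_self hs)).ne').hasDerivWithinAt)
      ((intervalIntegrable_iff_integrableOn_Icc_of_le huv).1 hg.neg)
      (fun s hs => by
        have hs' := Ioo_subset_Icc_self hs
        rw [div_le_iff₀ (hpos s hs')]
        linarith [hle s hs'])
  have hxu := hpos u (left_mem_Icc.2 huv)
  have hxv := hpos v (right_mem_Icc.2 huv)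
  rw [integral_neg] at hlog
  have := exp_le_exp.2 (show ∫ s in u..v, g s ≤ log (x u) - log (x v) by linarith)
  rwa [exp_sub, exp_log hxu, exp_log hxv, le_div_iff₀ hxv] at this

theorem integral_le_one_add_log_div_of_hasDerivAt {x x' G : ℝ → ℝ} {b t lam : ℝ} (hbt : b ≤ t)
    (hlam : 1 ≤ lam) (hx : ∀ s ∈ Icc b t, HasDerivAt x (x' s) s)
    (hpos : ∀ s ∈ Icc b t, 0 < x s) (hG : IntervalIntegrable G volume b t)
    (hfar : ∀ s ∈ Icc b t, x' s ≤ -(G s * x b))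
    (hnear : ∀ s ∈ Icc b t, x' s ≤ -(lam * G s * x s)) :
    ∫ s in b..t, G s ≤ (1 + log lam) / lam := by
  by_contra! hbig
  have hlam0 : 0 < lam := one_pos.trans_le hlam
  have hlog : 0 ≤ log lam := log_nonneg hlam
  obtain ⟨c, hc, hcG⟩ : ∃ c ∈ Icc b t, ∫ s in c..t, G s = 1 / lam := by
    have hcont := continuousOn_primitive_interval_left (μ := volume) (f := G) (a := b) (b := t)
      (by rw [uIcc_of_le hbt]; exact (intervalIntegrable_iff_integrableOn_Icc_of_le hbt).1 hG)
    rw [uIcc_of_le hbt] at hcont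
    refine intermediate_value_Icc' hbt hcont ⟨by simp [hlam0.le], ?_⟩
    calc 1 / lam ≤ (1 + log lam) / lam := by gcongr; linarith
      _ ≤ _ := hbig.le
  have hGc : IntervalIntegrable G volume c t := hG.mono_set (by
    rw [uIcc_of_le hbt, uIcc_of_le hc.2]; exact Icc_subset_Icc_left hc.1)
  have hGb : IntervalIntegrable G volume b c := hG.mono_set (by
    rw [uIcc_of_le hbt, uIcc_of_le hc.1]; exact Icc_subset_Icc_right hc.2)
  have hsub : Icc c t ⊆ Icc b t := Icc_subset_Icc_left hc.1
  have hsub' : Icc b c ⊆ Icc b t := Icc_subset_Icc_right hc.2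
  have hdrop : x t - x c ≤ -(x b / lam) := by
    have := sub_le_integral_of_hasDeriv_right_of_le (φ := fun s => -(G s * x b)) hc.2
      (fun s hs => (hx s (hsub hs)).continuousAt.continuousWithinAt)
      (fun s hs => (hx s (hsub (Ioo_subset_Icc_self hs))).hasDerivWithinAt)
      ((intervalIntegrable_iff_integrableOn_Icc_of_le hc.2).1 (hGc.mul_const (x b)).neg)
      (fun s hs => hfar s (hsub (Ioo_subset_Icc_self hs)))
    rwa [integral_neg, integral_mul_const, hcG, one_div_mul_eq_div] at this
  have hgrowth : exp (∫ s in b..c, lam * G s) * x c ≤ x b :=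
    exp_integral_mul_le_of_hasDerivAt hc.1 (fun s hs => hx s (hsub' hs))
      (fun s hs => hpos s (hsub' hs)) (hGb.const_mul lam) (fun s hs => hnear s (hsub' hs))
  have hmass : log lam < lam * ∫ s in b..c, G s := by
    rw [← integral_add_adjacent_intervals hGb hGc, hcG, add_div, add_comm, add_lt_add_iff_right,
      div_lt_iff₀ hlam0] at hbig
    linarith
  have hexp : lam < exp (∫ s in b..c, lam * G s) := by
    rw [integral_const_mul]
    calc lam = exp (log lam) := (exp_log hlam0).symm
      _ < _ := exp_lt_exp.2 hmass
  have hxc := hpos c hc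
  have hxt := hpos t (right_mem_Icc.2 hbt)
  have := mul_lt_mul_of_pos_right hexp hxc
  rw [le_neg, div_le_iff₀ hlam0] at hdrop
  nlinarith

theorem lt_exp_mul_of_lt_of_isLeast {α lam₀ μ : ℝ}
    (hlam₀ : IsLeast {l | 0 < l ∧ l = exp (α * l)} lam₀) (hμ : μ < lam₀) :
    μ < exp (α * μ) := by
  rcases lt_or_ge μ 0 with hneg | hμ0
  · exact hneg.trans (exp_pos _)
  by_contra! hle
  obtain ⟨z, hz, hfz⟩ := intermediate_value_Icc' hμ0
    (f := fun l => exp (α * l) - l) (by fun_prop)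
    (show (0 : ℝ) ∈ Icc (exp (α * μ) - μ) (exp (α * 0) - 0) from ⟨by linarith, by simp⟩)
  have hzfix : z = exp (α * z) := by linarith [show exp (α * z) - z = 0 from hfz]
  have := hlam₀.2 ⟨hzfix ▸ exp_pos _, hzfix⟩
  linarith [hz.2]

theorem exists_lt_forall_add_lt_exp_mul {α L : ℝ} (h : ∀ μ ∈ Icc 1 L, μ < exp (α * μ)) :
    ∃ β < α, ∃ δ > 0, ∀ μ ∈ Icc 1 L, μ + δ < exp (β * μ) := by
  have hev : ∀ᶠ q in 𝓝 (α, (0 : ℝ)), ∀ μ ∈ Icc 1 L, μ + q.2 < exp (q.1 * μ) :=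
    isCompact_Icc.eventually_forall_of_forall_eventually fun μ hμ =>
      (isOpen_lt (by fun_prop) (by fun_prop)).mem_nhds (by simpa using h μ hμ)
  rw [nhds_prod_eq] at hev
  obtain ⟨⟨β, δ⟩, hβδ, hβ, hδ⟩ :=
    ((hev.filter_mono (prod_mono nhdsWithin_le_nhds nhdsWithin_le_nhds)).and
      (prod_mem_prod (self_mem_nhdsWithin (s := Iio α)) (self_mem_nhdsWithin (s := Ioi 0)))).exists
  exact ⟨β, hβ, δ, hδ, hβδ⟩

theorem exists_mem_Ioo_one_add_log_div_lt {lam₀ L : ℝ} (h1 : 1 < lam₀)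
    (hL : (1 + log lam₀) / lam₀ < L) : ∃ lam ∈ Ioo 1 lam₀, (1 + log lam) / lam < L := by
  have hc : ContinuousAt (fun l => (1 + log l) / l) lam₀ :=
    (continuousAt_const.add (continuousAt_log (by positivity))).div continuousAt_id (by positivity)
  obtain ⟨lam, hlt, hmem⟩ := ((hc.continuousWithinAt (s := Iio lam₀)).eventually_lt_const hL |>.and
    (Ioo_mem_nhdsLT h1)).exists
  exact ⟨lam, hmem, hlt⟩

section MaxDelay

variable {ι : Type*} {τ : ι → ℝ → ℝ}

def delayValues (τ : ι → ℝ → ℝ) (t : ℝ) : Set ℝ :=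
  {y | ∃ i, ∃ s, 0 ≤ s ∧ s ≤ t ∧ y = τ i s}

noncomputable def maxDelay (τ : ι → ℝ → ℝ) (t : ℝ) : ℝ :=
  sSup (delayValues τ t)

theorem delayValues_subset_Iic (hτ : ∀ i t, 0 ≤ t → τ i t < t) (t : ℝ) :
    delayValues τ t ⊆ Iic t := by
  rintro _ ⟨i, s, hs0, hst, rfl⟩
  exact (hτ i s hs0).le.trans hst

theorem le_maxDelay (hτ : ∀ i t, 0 ≤ t → τ i t < t) (i : ι) {t : ℝ} (ht : 0 ≤ t) :
    τ i t ≤ maxDelay τ t :=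
  le_csSup ⟨t, delayValues_subset_Iic hτ t⟩ ⟨i, t, ht, le_rfl, rfl⟩

theorem maxDelay_le (hτ : ∀ i t, 0 ≤ t → τ i t < t) {t : ℝ} (ht : 0 ≤ t) : maxDelay τ t ≤ t :=
  Real.sSup_le (delayValues_subset_Iic hτ t) ht

theorem monotoneOn_maxDelay [Nonempty ι] (hτ : ∀ i t, 0 ≤ t → τ i t < t) :
    MonotoneOn (maxDelay τ) (Ici 0) := by
  intro t ht t' _ htt'
  refine csSup_le_csSup ⟨t', delayValues_subset_Iic hτ t'⟩
    ⟨_, Classical.arbitrary ι, t, ht, le_rfl, rfl⟩ ?_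
  rintro _ ⟨i, s, hs0, hst, rfl⟩
  exact ⟨i, s, hs0, hst.trans htt', rfl⟩

theorem tendsto_maxDelay [Nonempty ι] (hτ : ∀ i t, 0 ≤ t → τ i t < t)
    (hτtop : ∀ i, Tendsto (τ i) atTop atTop) : Tendsto (maxDelay τ) atTop atTop := by
  refine tendsto_atTop_mono' atTop ?_ (hτtop (Classical.arbitrary ι))
  filter_upwards [eventually_ge_atTop 0] with t ht
  exact le_maxDelay hτ _ ht

theorem continuousOn_maxDelay [Finite ι] (hτc : ∀ i, Continuous (τ i)) :
    ContinuousOn (maxDelay τ) (Ici 0) := by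
  let _ : TopologicalSpace ι := ⊥
  have _ : DiscreteTopology ι := ⟨rfl⟩
  -- for `t ≥ 0`, `delayValues τ t` is the image of the compact `ι × [0, 1]` under
  -- `(i, u) ↦ τ i (u t)`
  have hcont : Continuous fun z : ℝ × (ι × ℝ) => τ z.2.1 (z.2.2 * z.1) := by
    have : Continuous fun w : ι × (ℝ × ℝ) => τ w.1 (w.2.2 * w.2.1) :=
      continuous_prod_of_discrete_left.2 fun i => (hτc i).comp (by fun_prop)
    exact this.comp (continuous_snd.fst.prodMk (continuous_fst.prodMk continuous_snd.snd))
  refine ((isCompact_univ.prod (isCompact_Icc (a := 0) (b := 1))).continuous_sSup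
    (f := fun t (q : ι × ℝ) => τ q.1 (q.2 * t)) hcont).continuousOn.congr
    fun t (ht : 0 ≤ t) => congrArg sSup ?_
  ext y
  constructor
  · rintro ⟨i, s, hs0, hst, rfl⟩
    obtain ⟨u, hu, rfl⟩ : s ∈ (· * t) '' Icc 0 1 := by
      rw [image_mul_right_Icc zero_le_one ht]; simpa using ⟨hs0, hst⟩
    exact ⟨(i, u), ⟨mem_univ i, hu⟩, rfl⟩
  · rintro ⟨⟨i, u⟩, ⟨-, hu⟩, rfl⟩
    exact ⟨i, u * t, mul_nonneg hu.1 ht, mul_le_of_le_one_left ht hu.2, rfl⟩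

end MaxDelay

section Equation

variable {ι : Type*} [Fintype ι] {p τ : ι → ℝ → ℝ} {x : ℝ → ℝ}

theorem sum_mul_mul_le_sum_mul {p c z : ι → ℝ} {y : ℝ} (hp : ∀ i, 0 ≤ p i)
    (h : ∀ i, c i * y ≤ z i) : (∑ i, p i * c i) * y ≤ ∑ i, p i * z i := by
  rw [Finset.sum_mul]
  exact Finset.sum_le_sum fun i _ => by rw [mul_assoc]; exact mul_le_mul_of_nonneg_left (h i) (hp i)

theorem continuous_sum_mul_comp_delay (hpc : ∀ i, Continuous (p i))
    (hτc : ∀ i, Continuous (τ i)) {c : ℝ → ℝ → ℝ} (hc : Continuous (Function.uncurry c)) :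
    Continuous fun ζ => ∑ i, p i ζ * c ζ (τ i ζ) :=
  continuous_finsetSum _ fun i _ => (hpc i).mul (hc.comp (continuous_id.prodMk (hτc i)))

/-- The paper's functionals are `a₁ = expFunctional p τ 1` and `a_{r+1} = expFunctional p τ a_r`. -/
noncomputable def expFunctional (p τ : ι → ℝ → ℝ) (c : ℝ → ℝ → ℝ) (t s : ℝ) : ℝ :=
  exp (∫ ζ in s..t, ∑ i, p i ζ * c ζ (τ i ζ))

theorem continuous_expFunctional (hpc : ∀ i, Continuous (p i)) (hτc : ∀ i, Continuous (τ i))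
    {c : ℝ → ℝ → ℝ} (hc : Continuous (Function.uncurry c)) :
    Continuous (Function.uncurry (expFunctional p τ c)) :=
  continuous_exp.comp
    (continuous_intervalIntegral_bounds (continuous_sum_mul_comp_delay hpc hτc hc))

theorem expFunctional_induction {a : ℕ → ℝ → ℝ → ℝ}
    (ha1 : ∀ t s, a 1 t s = exp (∫ ζ in s..t, ∑ i, p i ζ))
    (harec : ∀ k t s, a (k + 1) t s = exp (∫ ζ in s..t, ∑ i, p i ζ * a k ζ (τ i ζ)))
    (P : (ℝ → ℝ → ℝ) → Prop) (hP1 : P fun _ _ => 1) (hP : ∀ c, P c → P (expFunctional p τ c))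
    {k : ℕ} (hk : 1 ≤ k) : P (a k) := by
  induction k, hk using Nat.le_induction with
  | base =>
    convert hP _ hP1 using 1
    funext t s
    simp [expFunctional, ha1]
  | succ k _ ih =>
    convert hP _ ih using 1
    funext t s
    exact harec k t s

theorem exp_integral_mul_le_of_delay {c : ι → ℝ → ℝ} {u v : ℝ} (huv : u ≤ v)
    (hx : ∀ s ∈ Icc u v, HasDerivAt x (-∑ i, p i s * x (τ i s)) s)
    (hpos : ∀ s ∈ Icc u v, 0 < x s) (hp : ∀ i, ∀ s ∈ Icc u v, 0 ≤ p i s)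
    (hc : ∀ i, ∀ s ∈ Icc u v, c i s * x s ≤ x (τ i s))
    (hint : IntervalIntegrable (fun s => ∑ i, p i s * c i s) volume u v) :
    exp (∫ s in u..v, ∑ i, p i s * c i s) * x v ≤ x u :=
  exp_integral_mul_le_of_hasDerivAt huv hx hpos hint fun s hs =>
    neg_le_neg (sum_mul_mul_le_sum_mul (fun i => hp i s hs) fun i => hc i s hs)

theorem eventually_antitoneOn (hp : ∀ i t, 0 ≤ t → 0 ≤ p i t)
    (hτtop : ∀ i, Tendsto (τ i) atTop atTop)
    (hx : ∀ t, 0 ≤ t → HasDerivAt x (-∑ i, p i t * x (τ i t)) t)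
    (hxpos : ∀ᶠ t in atTop, 0 < x t) : ∀ᶠ T in atTop, AntitoneOn x (Ici T) := by
  obtain ⟨T, hT⟩ := eventually_atTop.1 ((eventually_ge_atTop 0).and
    (eventually_all.2 fun i => (hτtop i).eventually hxpos))
  refine eventually_atTop.2 ⟨T, fun T' hT' => ?_⟩
  apply antitoneOn_of_hasDerivWithinAt_nonpos (convex_Ici T')
    (f' := fun t => -∑ i, p i t * x (τ i t))
  · exact fun t ht => (hx t (hT t (hT'.trans ht)).1).continuousAt.continuousWithinAt
  · rw [interior_Ici]
    exact fun t ht => (hx t (hT t (hT'.trans ht.le)).1).hasDerivWithinAt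
  · rw [interior_Ici]
    intro t ht
    obtain ⟨ht0, hτpos⟩ := hT t (hT'.trans ht.le)
    exact neg_nonpos.2 (Finset.sum_nonneg fun i _ => mul_nonneg (hp i t ht0) (hτpos i).le)

theorem eventually_expFunctional_mul_le (hp : ∀ i t, 0 ≤ t → 0 ≤ p i t)
    (hpc : ∀ i, Continuous (p i)) (hτ : ∀ i t, 0 ≤ t → τ i t < t)
    (hτc : ∀ i, Continuous (τ i)) (hτtop : ∀ i, Tendsto (τ i) atTop atTop)
    (hx : ∀ t, 0 ≤ t → HasDerivAt x (-∑ i, p i t * x (τ i t)) t)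
    (hxpos : ∀ᶠ t in atTop, 0 < x t) {c : ℝ → ℝ → ℝ} (hc : Continuous (Function.uncurry c))
    (hcx : ∀ᶠ u in atTop, ∀ v, u ≤ v → c v u * x v ≤ x u) :
    ∀ᶠ u in atTop, ∀ v, u ≤ v → expFunctional p τ c v u * x v ≤ x u := by
  have hgood : ∀ᶠ s in atTop, 0 ≤ s ∧ 0 < x s ∧ ∀ i, c s (τ i s) * x s ≤ x (τ i s) := by
    filter_upwards [eventually_ge_atTop 0, hxpos,
      eventually_all.2 fun i => (hτtop i).eventually hcx] with s hs0 hxs hcs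
    exact ⟨hs0, hxs, fun i => hcs i s (hτ i s hs0).le⟩
  filter_upwards [eventually_forall_ge_atTop.2 hgood] with u hu v huv
  exact exp_integral_mul_le_of_delay (c := fun i s => c s (τ i s)) huv
    (fun s hs => hx s (hu s hs.1).1) (fun s hs => (hu s hs.1).2.1)
    (fun i s hs => hp i s (hu s hs.1).1) (fun i s hs => (hu s hs.1).2.2 i)
    ((continuous_sum_mul_comp_delay hpc hτc hc).intervalIntegrable u v)

theorem continuous_iterExp {a : ℕ → ℝ → ℝ → ℝ} (hpc : ∀ i, Continuous (p i))
    (hτc : ∀ i, Continuous (τ i)) (ha1 : ∀ t s, a 1 t s = exp (∫ ζ in s..t, ∑ i, p i ζ))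
    (harec : ∀ k t s, a (k + 1) t s = exp (∫ ζ in s..t, ∑ i, p i ζ * a k ζ (τ i ζ)))
    {k : ℕ} (hk : 1 ≤ k) : Continuous (Function.uncurry (a k)) :=
  expFunctional_induction ha1 harec (fun c => Continuous (Function.uncurry c)) continuous_const
    (fun _ hc => continuous_expFunctional hpc hτc hc) hk

theorem iterExp_pos {a : ℕ → ℝ → ℝ → ℝ} (ha1 : ∀ t s, a 1 t s = exp (∫ ζ in s..t, ∑ i, p i ζ))
    (harec : ∀ k t s, a (k + 1) t s = exp (∫ ζ in s..t, ∑ i, p i ζ * a k ζ (τ i ζ)))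
    {k : ℕ} (hk : 1 ≤ k) (t s : ℝ) : 0 < a k t s :=
  expFunctional_induction ha1 harec (fun c => ∀ t s, 0 < c t s) (fun _ _ => one_pos)
    (fun _ _ _ _ => exp_pos _) hk t s

theorem eventually_iterExp_mul_le (hp : ∀ i t, 0 ≤ t → 0 ≤ p i t)
    (hpc : ∀ i, Continuous (p i)) (hτ : ∀ i t, 0 ≤ t → τ i t < t)
    (hτc : ∀ i, Continuous (τ i)) (hτtop : ∀ i, Tendsto (τ i) atTop atTop)
    (hx : ∀ t, 0 ≤ t → HasDerivAt x (-∑ i, p i t * x (τ i t)) t)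
    (hxpos : ∀ᶠ t in atTop, 0 < x t) {a : ℕ → ℝ → ℝ → ℝ}
    (ha1 : ∀ t s, a 1 t s = exp (∫ ζ in s..t, ∑ i, p i ζ))
    (harec : ∀ k t s, a (k + 1) t s = exp (∫ ζ in s..t, ∑ i, p i ζ * a k ζ (τ i ζ)))
    {k : ℕ} (hk : 1 ≤ k) : ∀ᶠ u in atTop, ∀ v, u ≤ v → a k v u * x v ≤ x u := by
  refine (expFunctional_induction ha1 harec
    (fun c => Continuous (Function.uncurry c) ∧ ∀ᶠ u in atTop, ∀ v, u ≤ v → c v u * x v ≤ x u)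
    ⟨continuous_const, ?_⟩ (fun c hc => ⟨continuous_expFunctional hpc hτc hc.1,
      eventually_expFunctional_mul_le hp hpc hτ hτc hτtop hx hxpos hc.1 hc.2⟩) hk).2
  filter_upwards [eventually_antitoneOn hp hτtop hx hxpos] with u hu v huv
  simpa using hu (mem_Ici.2 le_rfl) huv huv

theorem eventually_exp_mul_integral_mul_le [Nonempty ι] (hp : ∀ i t, 0 ≤ t → 0 ≤ p i t)
    (hpc : ∀ i, Continuous (p i)) (hτ : ∀ i t, 0 ≤ t → τ i t < t)
    (hτtop : ∀ i, Tendsto (τ i) atTop atTop)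
    (hx : ∀ t, 0 ≤ t → HasDerivAt x (-∑ i, p i t * x (τ i t)) t)
    (hxpos : ∀ᶠ t in atTop, 0 < x t) {μ : ℝ}
    (hμx : ∀ᶠ t in atTop, μ * x t ≤ x (maxDelay τ t)) :
    ∀ᶠ t in atTop, exp (μ * ∫ s in maxDelay τ t..t, ∑ i, p i s) * x t ≤ x (maxDelay τ t) := by
  obtain ⟨T, hT⟩ := (eventually_antitoneOn hp hτtop hx hxpos).exists
  have hgood : ∀ᶠ s in atTop, 0 ≤ s ∧ 0 < x s ∧ ∀ i, μ * x s ≤ x (τ i s) := by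
    filter_upwards [eventually_ge_atTop 0, hxpos, hμx,
      eventually_all.2 fun i => (hτtop i).eventually_ge_atTop T] with s hs0 hxs hμs hτs
    exact ⟨hs0, hxs, fun i => hμs.trans
      (hT (hτs i) ((hτs i).trans (le_maxDelay hτ i hs0)) (le_maxDelay hτ i hs0))⟩
  filter_upwards [eventually_ge_atTop 0,
    (tendsto_maxDelay hτ hτtop).eventually (eventually_forall_ge_atTop.2 hgood)] with t ht0 ht
  have := exp_integral_mul_le_of_delay (c := fun _ _ => μ) (maxDelay_le hτ ht0)
    (fun s hs => hx s (ht s hs.1).1) (fun s hs => (ht s hs.1).2.1)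
    (fun i s hs => hp i s (ht s hs.1).1) (fun i s hs => (ht s hs.1).2.2 i)
    ((continuous_finsetSum _ fun i _ => (hpc i).mul continuous_const).intervalIntegrable _ _)
  simp only [← Finset.sum_mul] at this
  rwa [integral_mul_const, mul_comm _ μ] at this

theorem eventually_mul_le_maxDelay [Nonempty ι] (hp : ∀ i t, 0 ≤ t → 0 ≤ p i t)
    (hpc : ∀ i, Continuous (p i)) (hτ : ∀ i t, 0 ≤ t → τ i t < t)
    (hτtop : ∀ i, Tendsto (τ i) atTop atTop)
    (hx : ∀ t, 0 ≤ t → HasDerivAt x (-∑ i, p i t * x (τ i t)) t)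
    (hxpos : ∀ᶠ t in atTop, 0 < x t) {α lam : ℝ}
    (hα : α = liminf (fun t => ∫ s in maxDelay τ t..t, ∑ i, p i s) atTop) (hα0 : 0 < α)
    (hlam : ∀ μ ∈ Icc 1 lam, μ < exp (α * μ)) (hlam1 : 1 ≤ lam) :
    ∀ᶠ t in atTop, lam * x t ≤ x (maxDelay τ t) := by
  obtain ⟨β, hβα, δ, hδ, hβδ⟩ := exists_lt_forall_add_lt_exp_mul hlam
  have hmass : ∀ᶠ t in atTop, β ≤ ∫ s in maxDelay τ t..t, ∑ i, p i s := by
    refine (eventually_lt_of_lt_liminf (hα ▸ hβα) ?_).mono fun t => le_of_lt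
    by_contra hb
    rw [Real.liminf_of_not_isBoundedUnder hb] at hα
    exact hα0.ne' hα
  -- one comparison on `[maxDelay τ t, t]` improves a ratio bound `μ ∈ [1, lam]`
  -- to `exp (β μ) > μ + δ`
  have hstep : ∀ μ ∈ Icc 1 lam, (∀ᶠ t in atTop, μ * x t ≤ x (maxDelay τ t)) →
      ∀ᶠ t in atTop, (μ + δ) * x t ≤ x (maxDelay τ t) := by
    intro μ hμ hμx
    filter_upwards [eventually_exp_mul_integral_mul_le hp hpc hτ hτtop hx hxpos hμx, hmass, hxpos]
      with t ht hβt hxt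
    refine le_trans (mul_le_mul_of_nonneg_right ?_ hxt.le) ht
    calc μ + δ ≤ exp (β * μ) := (hβδ μ hμ).le
      _ ≤ _ := exp_le_exp.2 <| by
        rw [mul_comm]; exact mul_le_mul_of_nonneg_left hβt (by linarith [hμ.1])
  have hiter : ∀ n : ℕ, ∀ᶠ t in atTop, min lam (1 + n * δ) * x t ≤ x (maxDelay τ t) := by
    intro n
    induction n with
    | zero =>
      obtain ⟨T, hT⟩ := (eventually_antitoneOn hp hτtop hx hxpos).exists
      filter_upwards [eventually_ge_atTop 0, (tendsto_maxDelay hτ hτtop).eventually_ge_atTop T]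
        with t ht0 hTt
      simpa [hlam1] using hT hTt (hTt.trans (maxDelay_le hτ ht0)) (maxDelay_le hτ ht0)
    | succ n ih =>
      have hμ : min lam (1 + n * δ) ∈ Icc 1 lam :=
        ⟨le_min hlam1 (by nlinarith [n.cast_nonneg (α := ℝ)]), min_le_left _ _⟩
      filter_upwards [hstep _ hμ ih, hxpos] with t ht hxt
      refine le_trans (mul_le_mul_of_nonneg_right ?_ hxt.le) ht
      push_cast
      calc min lam (1 + (n + 1) * δ) ≤ min (lam + δ) (1 + n * δ + δ) :=
            min_le_min (by linarith) (by linarith)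
        _ = _ := min_add_add_right _ _ _
  obtain ⟨N, hN⟩ := exists_nat_ge ((lam - 1) / δ)
  refine (hiter N).mono fun t ht => ?_
  rwa [min_eq_left (by rw [div_le_iff₀ hδ] at hN; linarith)] at ht

theorem eventually_integral_le_one_add_log_div [Nonempty ι] (hp : ∀ i t, 0 ≤ t → 0 ≤ p i t)
    (hpc : ∀ i, Continuous (p i)) (hτ : ∀ i t, 0 ≤ t → τ i t < t)
    (hτc : ∀ i, Continuous (τ i)) (hτtop : ∀ i, Tendsto (τ i) atTop atTop)
    (hx : ∀ t, 0 ≤ t → HasDerivAt x (-∑ i, p i t * x (τ i t)) t)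
    (hxpos : ∀ᶠ t in atTop, 0 < x t) {c : ℝ → ℝ → ℝ} (hc : Continuous (Function.uncurry c))
    (hc0 : ∀ t s, 0 ≤ c t s) (hcx : ∀ᶠ u in atTop, ∀ v, u ≤ v → c v u * x v ≤ x u)
    {lam : ℝ} (hlam1 : 1 ≤ lam) (hlamx : ∀ᶠ t in atTop, lam * x t ≤ x (maxDelay τ t)) :
    ∀ᶠ t in atTop,
      ∫ ζ in maxDelay τ t..t, ∑ i, p i ζ * c (maxDelay τ ζ) (τ i ζ) ≤ (1 + log lam) / lam := by
  obtain ⟨T, hT⟩ := (eventually_antitoneOn hp hτtop hx hxpos).exists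
  have hgood : ∀ᶠ ζ in atTop, 0 ≤ ζ ∧ 0 < x ζ ∧ T ≤ maxDelay τ ζ ∧
      lam * x ζ ≤ x (maxDelay τ ζ) ∧
      ∀ i, c (maxDelay τ ζ) (τ i ζ) * x (maxDelay τ ζ) ≤ x (τ i ζ) := by
    filter_upwards [eventually_ge_atTop 0, hxpos,
      (tendsto_maxDelay hτ hτtop).eventually_ge_atTop T, hlamx,
      eventually_all.2 fun i => (hτtop i).eventually hcx] with ζ hζ0 hxζ hTζ hlamζ hcζ
    exact ⟨hζ0, hxζ, hTζ, hlamζ, fun i => hcζ i _ (le_maxDelay hτ i hζ0)⟩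
  have hG : ContinuousOn (fun ζ => ∑ i, p i ζ * c (maxDelay τ ζ) (τ i ζ)) (Ici 0) :=
    continuousOn_finsetSum _ fun i _ => (hpc i).continuousOn.mul
      (hc.comp_continuousOn ((continuousOn_maxDelay hτc).prodMk (hτc i).continuousOn))
  filter_upwards [eventually_ge_atTop 0,
    (tendsto_maxDelay hτ hτtop).eventually (eventually_forall_ge_atTop.2 hgood)] with t ht0 ht
  have hbt := maxDelay_le hτ ht0
  have hb0 : 0 ≤ maxDelay τ t := (ht _ le_rfl).1
  have hxb : ∀ ζ ∈ Icc (maxDelay τ t) t, x (maxDelay τ t) ≤ x (maxDelay τ ζ) := fun ζ hζ =>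
    hT (ht ζ hζ.1).2.2.1 (ht t hbt).2.2.1
      (monotoneOn_maxDelay hτ (hb0.trans hζ.1) ht0 hζ.2)
  refine integral_le_one_add_log_div_of_hasDerivAt hbt hlam1 (fun ζ hζ => hx ζ (ht ζ hζ.1).1)
    (fun ζ hζ => (ht ζ hζ.1).2.1)
    ((hG.mono fun ζ hζ => hb0.trans hζ.1).intervalIntegrable_of_Icc hbt) (fun ζ hζ => ?_)
    (fun ζ hζ => ?_)
  · obtain ⟨hζ0, -, -, -, hcζ⟩ := ht ζ hζ.1
    exact neg_le_neg (sum_mul_mul_le_sum_mul (fun i => hp i ζ hζ0) fun i =>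
      (mul_le_mul_of_nonneg_left (hxb ζ hζ) (hc0 _ _)).trans (hcζ i))
  · obtain ⟨hζ0, -, -, hlamζ, hcζ⟩ := ht ζ hζ.1
    rw [mul_comm lam, mul_assoc]
    exact neg_le_neg (sum_mul_mul_le_sum_mul (fun i => hp i ζ hζ0) fun i =>
      (mul_le_mul_of_nonneg_left hlamζ (hc0 _ _)).trans (hcζ i))

theorem not_eventually_pos_of_lt_limsup [Nonempty ι] (hp : ∀ i t, 0 ≤ t → 0 ≤ p i t)
    (hpc : ∀ i, Continuous (p i)) (hτ : ∀ i t, 0 ≤ t → τ i t < t)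
    (hτc : ∀ i, Continuous (τ i)) (hτtop : ∀ i, Tendsto (τ i) atTop atTop)
    {a : ℕ → ℝ → ℝ → ℝ} (ha1 : ∀ t s, a 1 t s = exp (∫ ζ in s..t, ∑ i, p i ζ))
    (harec : ∀ k t s, a (k + 1) t s = exp (∫ ζ in s..t, ∑ i, p i ζ * a k ζ (τ i ζ)))
    {α : ℝ} (hα : α = liminf (fun t => ∫ s in maxDelay τ t..t, ∑ i, p i s) atTop) (hα0 : 0 < α)
    {lam₀ : ℝ} (hlam₀ : IsLeast {l | 0 < l ∧ l = exp (α * l)} lam₀) {r : ℕ} (hr : 1 ≤ r)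
    (hsup : (1 + log lam₀) / lam₀ < limsup
      (fun t => ∫ ζ in maxDelay τ t..t, ∑ i, p i ζ * a r (maxDelay τ ζ) (τ i ζ)) atTop)
    (hx : ∀ t, 0 ≤ t → HasDerivAt x (-∑ i, p i t * x (τ i t)) t) :
    ¬ ∀ᶠ t in atTop, 0 < x t := by
  intro hxpos
  have hlam₀1 : 1 < lam₀ := by
    rw [hlam₀.1.2]
    exact one_lt_exp_iff.2 (mul_pos hα0 hlam₀.1.1)
  obtain ⟨lam, ⟨hlam1, hlamlt⟩, hlamL⟩ := exists_mem_Ioo_one_add_log_div_lt hlam₀1 hsup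
  have hlamx := eventually_mul_le_maxDelay hp hpc hτ hτtop hx hxpos hα hα0
    (fun μ hμ => lt_exp_mul_of_lt_of_isLeast hlam₀ (hμ.2.trans_lt hlamlt)) hlam1.le
  have hbound := eventually_integral_le_one_add_log_div hp hpc hτ hτc hτtop hx hxpos
    (continuous_iterExp hpc hτc ha1 harec hr) (fun t s => (iterExp_pos ha1 harec hr t s).le)
    (eventually_iterExp_mul_le hp hpc hτ hτc hτtop hx hxpos ha1 harec hr) hlam1.le hlamx
  have hnonneg : ∀ᶠ t in atTop,
      0 ≤ ∫ ζ in maxDelay τ t..t, ∑ i, p i ζ * a r (maxDelay τ ζ) (τ i ζ) := by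
    filter_upwards [eventually_ge_atTop 0, (tendsto_maxDelay hτ hτtop).eventually_ge_atTop 0]
      with t ht0 hb0
    exact integral_nonneg (maxDelay_le hτ ht0) fun ζ hζ => Finset.sum_nonneg fun i _ =>
      mul_nonneg (hp i ζ (hb0.trans hζ.1)) (iterExp_pos ha1 harec hr _ _).le
  exact (limsup_le_of_le (isCoboundedUnder_le_of_eventually_le atTop hnonneg) hbound).not_gt hlamL

end Equation

theorem stmt13_general (m : ℕ) (hm : 1 ≤ m) (p τ : Fin m → ℝ → ℝ)
    (hp : ∀ i t, 0 ≤ t → 0 ≤ p i t) (hpc : ∀ i, Continuous (p i))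
    (hτ : ∀ i t, 0 ≤ t → τ i t < t) (hτc : ∀ i, Continuous (τ i))
    (hτtop : ∀ i, Tendsto (τ i) atTop atTop)
    (h : ℝ → ℝ)
    (hh : ∀ t, h t = sSup {y : ℝ | ∃ i : Fin m, ∃ s, 0 ≤ s ∧ s ≤ t ∧ y = τ i s})
    (a : ℕ → ℝ → ℝ → ℝ)
    (ha1 : ∀ t s, a 1 t s = Real.exp (∫ ζ in s..t, ∑ i, p i ζ))
    (harec : ∀ r t s, a (r + 1) t s =
      Real.exp (∫ ζ in s..t, ∑ i, p i ζ * a r ζ (τ i ζ)))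
    (α : ℝ)
    (hα : α = liminf (fun t => ∫ s in h t..t, ∑ i, p i s) atTop)
    (hα0 : 0 < α)
    (lam₀ : ℝ)
    (hlam : IsLeast {lam : ℝ | 0 < lam ∧ lam = Real.exp (α * lam)} lam₀)
    (r : ℕ) (hr : 1 ≤ r)
    (hsup : (1 + Real.log lam₀) / lam₀ <
      limsup (fun t => ∫ ζ in h t..t, ∑ i, p i ζ * a r (h ζ) (τ i ζ)) atTop) :
    ∀ x : ℝ → ℝ, (∀ t, 0 ≤ t → HasDerivAt x (-(∑ i, p i t * x (τ i t))) t) →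
      (¬ ∃ T, ∀ t, T ≤ t → 0 < x t) ∧ (¬ ∃ T, ∀ t, T ≤ t → x t < 0) := by
  have : Nonempty (Fin m) := ⟨⟨0, hm⟩⟩
  obtain rfl : h = maxDelay τ := funext hh
  intro x hx
  constructor
  · rintro ⟨T, hT⟩
    exact not_eventually_pos_of_lt_limsup hp hpc hτ hτc hτtop ha1 harec hα hα0 hlam hr hsup hx
      (eventually_atTop.2 ⟨T, hT⟩)
  · rintro ⟨T, hT⟩
    refine not_eventually_pos_of_lt_limsup hp hpc hτ hτc hτtop ha1 harec hα hα0 hlam hr hsup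
      (x := fun t => -x t) (fun t ht => ?_)
      (eventually_atTop.2 ⟨T, fun t ht => neg_pos.2 (hT t ht)⟩)
    exact (hx t ht).neg.congr_deriv (by simp)

/-- Main theorem: with `h` the running maximum of the delays,
`a_r` the iterated exponential functionals,
`0 < α := liminf ∫_{h(t)}^t ∑ pᵢ ≤ 1/e` and `λ₀` the smaller root of
`λ = e^{αλ}`, if for some `r ∈ ℕ`
`limsup ∫_{h(t)}^t ∑ pᵢ(ζ) a_r(h(ζ), τᵢ(ζ)) dζ > (1 + ln λ₀)/λ₀`, then every
solution of `x'(t) + ∑ pᵢ(t) x(τᵢ(t)) = 0` oscillates. -/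
theorem stmt13 (m : ℕ) (hm : 1 ≤ m) (p τ : Fin m → ℝ → ℝ)
    (hp : ∀ i t, 0 ≤ t → 0 ≤ p i t) (hpc : ∀ i, Continuous (p i))
    (hτ : ∀ i t, 0 ≤ t → τ i t < t) (hτc : ∀ i, Continuous (τ i))
    (hτtop : ∀ i, Tendsto (τ i) atTop atTop)
    (h : ℝ → ℝ)
    (hh : ∀ t, h t = sSup {y : ℝ | ∃ i : Fin m, ∃ s, 0 ≤ s ∧ s ≤ t ∧ y = τ i s})
    (a : ℕ → ℝ → ℝ → ℝ)
    (ha1 : ∀ t s, a 1 t s = Real.exp (∫ ζ in s..t, ∑ i, p i ζ))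
    (harec : ∀ r t s, a (r + 1) t s =
      Real.exp (∫ ζ in s..t, ∑ i, p i ζ * a r ζ (τ i ζ)))
    (α : ℝ)
    (hα : α = liminf (fun t => ∫ s in h t..t, ∑ i, p i s) atTop)
    (hα0 : 0 < α) (hα1 : α ≤ 1 / Real.exp 1)
    (lam₀ : ℝ)
    (hlam : IsLeast {lam : ℝ | 0 < lam ∧ lam = Real.exp (α * lam)} lam₀)
    (r : ℕ) (hr : 1 ≤ r)
    (hsup : (1 + Real.log lam₀) / lam₀ <
      limsup (fun t => ∫ ζ in h t..t, ∑ i, p i ζ * a r (h ζ) (τ i ζ)) atTop) :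
    ∀ x : ℝ → ℝ, (∀ t, 0 ≤ t → HasDerivAt x (-(∑ i, p i t * x (τ i t))) t) →
      (¬ ∃ T, ∀ t, T ≤ t → 0 < x t) ∧ (¬ ∃ T, ∀ t, T ≤ t → x t < 0) :=
  stmt13_general m hm p τ hp hpc hτ hτc hτtop h hh a ha1 harec α hα hα0 lam₀ hlam r hr hsup
end

section
/- For 0 < α ≤ 1/e with λ₀ the smaller root of λ = e^{αλ}, one has (1 + ln λ₀)/λ₀ ≤ 1 − (1 − α − √(1 − 2α − α²))/2 for all α ∈ (0, 1/e] where the square root is defined (α ≤ √2 − 1); i.e., the bound (1+ln λ₀)/λ₀ is sharper than the classical bound 1 − (1−α−√(1−2α−α²))/2. -/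
/-!
Since `log λ₀ = αλ₀`, the left-hand side is `α + 1/λ₀`. Applying `eˣ ≥ 1 + x + x²/2` at
`x = αλ₀` and dividing by `λ₀²` shows that `t = 1/λ₀` satisfies `t² − (1 − α)t + α²/2 ≤ 0`,
so `t` lies below the larger root `(1 − α + √(1 − 2α − α²))/2` of that quadratic.
-/

open Real

lemma le_larger_root_of_quadratic_nonpos {b c s t : ℝ} (hs : 0 ≤ s)
    (hdisc : s ^ 2 = b ^ 2 - 4 * c) (h : t ^ 2 - b * t + c ≤ 0) : t ≤ (b + s) / 2 := by
  nlinarith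

lemma inv_quadratic_nonpos_of_eq_exp_mul {α lam : ℝ} (hα : 0 ≤ α) (hlam : 0 < lam)
    (h : lam = exp (α * lam)) : lam⁻¹ ^ 2 - (1 - α) * lam⁻¹ + α ^ 2 / 2 ≤ 0 := by
  have hquad : 1 + α * lam + (α * lam) ^ 2 / 2 ≤ lam := by
    have := quadratic_le_exp_of_nonneg (mul_nonneg hα hlam.le)
    rwa [← h] at this
  have hscaled := mul_le_mul_of_nonneg_left hquad (sq_nonneg lam⁻¹)
  have hleft : lam⁻¹ ^ 2 * (1 + α * lam + (α * lam) ^ 2 / 2)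
      = lam⁻¹ ^ 2 + α * lam⁻¹ + α ^ 2 / 2 := by
    field_simp
  have hright : lam⁻¹ ^ 2 * lam = lam⁻¹ := by
    field_simp
  linarith

lemma one_sub_two_mul_sub_sq_nonneg {α : ℝ} (hα0 : 0 ≤ α) (hα : α ≤ √2 - 1) :
    0 ≤ 1 - 2 * α - α ^ 2 := by
  have h2 : (α + 1) ^ 2 ≤ √2 ^ 2 := pow_le_pow_left₀ (by linarith) (by linarith) 2
  rw [sq_sqrt zero_le_two] at h2
  linarith

theorem stmt16_general (α lam₀ : ℝ) (hα0 : 0 < α)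
    (hαs : α ≤ Real.sqrt 2 - 1)
    (hlam : IsLeast {lam : ℝ | 0 < lam ∧ lam = Real.exp (α * lam)} lam₀) :
    (1 + Real.log lam₀) / lam₀ ≤
      1 - (1 - α - Real.sqrt (1 - 2 * α - α ^ 2)) / 2 := by
  obtain ⟨⟨hpos, heq⟩, -⟩ := hlam
  have hlog : log lam₀ = α * lam₀ := by rw [heq, log_exp, ← heq]
  have hlhs : (1 + log lam₀) / lam₀ = lam₀⁻¹ + α := by
    rw [hlog]
    field_simp
  have hdisc : √(1 - 2 * α - α ^ 2) ^ 2 = (1 - α) ^ 2 - 4 * (α ^ 2 / 2) := by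
    rw [sq_sqrt (one_sub_two_mul_sub_sq_nonneg hα0.le hαs)]
    ring
  have hroot := le_larger_root_of_quadratic_nonpos (sqrt_nonneg _) hdisc
    (inv_quadratic_nonpos_of_eq_exp_mul hα0.le hpos heq)
  rw [hlhs]
  linarith

/-- For `0 < α ≤ 1/e` with `λ₀` the smaller root of
`λ = e^{αλ}`, one has
`(1 + ln λ₀)/λ₀ ≤ 1 − (1 − α − √(1 − 2α − α²))/2`. -/
theorem stmt16 (α lam₀ : ℝ) (hα0 : 0 < α) (hα1 : α ≤ 1 / Real.exp 1)
    (hαs : α ≤ Real.sqrt 2 - 1)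
    (hlam : IsLeast {lam : ℝ | 0 < lam ∧ lam = Real.exp (α * lam)} lam₀) :
    (1 + Real.log lam₀) / lam₀ ≤
      1 - (1 - α - Real.sqrt (1 - 2 * α - α ^ 2)) / 2 :=
  stmt16_general α lam₀ hα0 hαs hlam
end

section
/- For the equation x'(t) + (27/200) x(τ₁(t)) + (27/200) x(τ₂(t)) = 0 with τ₁ the piecewise linear delay above and τ₂(t) = τ₁(t) − 0.1, one has α = liminf_{t→∞} ∫_{τ(t)}^t (p₁(s)+p₂(s)) ds = 27/100 < 1/e, where τ(t) = max(τ₁(t), τ₂(t)) = τ₁(t). -/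
/-!
On each period `[3k, 3k+3]` the delay `t - τ₁ t` equals `1`, `4t - 12k - 3 ≥ 1` and
`-4t + 12k + 13 ≥ 1` on the three pieces, so it is at least `1` for `t ≥ 0` and equals `1` at
every `t = 3k`. The integral of the constant `27/100` over `[τ₁ t, t]` is `27/100 · (t - τ₁ t)`,
hence its liminf is `27/100`, which is below `1/e` since `e < 2.72`.
-/

open Real Filter intervalIntegral

theorem Filter.liminf_eq_of_eventually_ge_of_frequently_le {ι β : Type*}
    [ConditionallyCompleteLinearOrder β] {l : Filter ι} {u : ι → β} {a : β}
    (h_ge : ∀ᶠ i in l, a ≤ u i) (h_le : ∃ᶠ i in l, u i ≤ a) : liminf u l = a :=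
  le_antisymm (liminf_le_of_frequently_le h_le (isBoundedUnder_of_eventually_ge h_ge))
    (le_liminf_of_le (IsCoboundedUnder.of_frequently_le h_le) h_ge)

def IsSawtoothDelay (τ : ℝ → ℝ) : Prop :=
  ∀ k : ℕ,
    (∀ t ∈ Set.Icc (3 * (k : ℝ)) (3 * k + 1), τ t = t - 1) ∧
    (∀ t ∈ Set.Icc (3 * (k : ℝ) + 1) (3 * k + 2), τ t = -3 * t + 12 * k + 3) ∧
    (∀ t ∈ Set.Icc (3 * (k : ℝ) + 2) (3 * k + 3), τ t = 5 * t - 12 * k - 13)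

namespace IsSawtoothDelay

variable {τ : ℝ → ℝ}

theorem one_le_sub (hτ : IsSawtoothDelay τ) {t : ℝ} (ht : 0 ≤ t) : 1 ≤ t - τ t := by
  set k : ℕ := ⌊t / 3⌋₊
  have hk_le : (k : ℝ) ≤ t / 3 := Nat.floor_le (by positivity)
  have hk_lt : t / 3 < k + 1 := Nat.lt_floor_add_one _
  obtain ⟨h_first, h_second, h_third⟩ := hτ k
  rcases le_or_gt t (3 * k + 1) with h₁ | h₁
  · rw [h_first t ⟨by linarith, h₁⟩]; linarith
  rcases le_or_gt t (3 * k + 2) with h₂ | h₂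
  · rw [h_second t ⟨h₁.le, h₂⟩]; linarith
  · rw [h_third t ⟨h₂.le, by linarith⟩]; linarith

theorem natCast_mul_three_sub (hτ : IsSawtoothDelay τ) (k : ℕ) :
    3 * (k : ℝ) - τ (3 * k) = 1 := by
  rw [(hτ k).1 (3 * k) ⟨le_rfl, by linarith⟩]
  ring

theorem frequently_sub_le_one (hτ : IsSawtoothDelay τ) : ∃ᶠ t in atTop, t - τ t ≤ 1 :=
  (tendsto_natCast_atTop_atTop.const_mul_atTop (by norm_num : (0 : ℝ) < 3)).frequently
    (.of_forall fun k => (hτ.natCast_mul_three_sub k).le)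

theorem liminf_integral_const (hτ : IsSawtoothDelay τ) {c : ℝ} (hc : 0 ≤ c) :
    liminf (fun t => ∫ _ in τ t..t, c) atTop = c := by
  simp only [integral_const, smul_eq_mul]
  refine liminf_eq_of_eventually_ge_of_frequently_le ?_ ?_
  · filter_upwards [eventually_ge_atTop 0] with t ht
    nlinarith [hτ.one_le_sub ht]
  · exact hτ.frequently_sub_le_one.mono fun t ht => by nlinarith

end IsSawtoothDelay

theorem lt_one_div_exp_one_of_le {x : ℝ} (hx : x ≤ 0.36) : x < 1 / exp 1 := by
  rw [lt_div_iff₀ (exp_pos 1)]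
  nlinarith [exp_one_lt_d9, exp_pos 1]

/-- For `x'(t) + (27/200) x(τ₁(t)) + (27/200) x(τ₂(t)) = 0`
with `τ₁` the piecewise linear delay and `τ₂ = τ₁ − 0.1`, one has
`α = liminf ∫_{τ(t)}^t (p₁ + p₂) = 27/100 < 1/e`, where
`τ(t) = max(τ₁(t), τ₂(t)) = τ₁(t)`. -/
theorem stmt18 (τ₁ τ₂ : ℝ → ℝ)
    (hτ₁ : ∀ k : ℕ,
      (∀ t ∈ Set.Icc (3 * (k : ℝ)) (3 * k + 1), τ₁ t = t - 1) ∧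
      (∀ t ∈ Set.Icc (3 * (k : ℝ) + 1) (3 * k + 2),
        τ₁ t = -3 * t + 12 * k + 3) ∧
      (∀ t ∈ Set.Icc (3 * (k : ℝ) + 2) (3 * k + 3),
        τ₁ t = 5 * t - 12 * k - 13))
    (hτ₂ : ∀ t, τ₂ t = τ₁ t - 0.1) :
    (∀ t, 0 ≤ t → max (τ₁ t) (τ₂ t) = τ₁ t) ∧
    liminf (fun t => ∫ s in τ₁ t..t, ((27 : ℝ) / 200 + 27 / 200)) atTop =
      27 / 100 ∧ (27 : ℝ) / 100 < 1 / Real.exp 1 := by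
  refine ⟨fun t _ => ?_, ?_, lt_one_div_exp_one_of_le (by norm_num)⟩
  · rw [hτ₂ t, max_eq_left (by norm_num)]
  · have hτ : IsSawtoothDelay τ₁ := hτ₁
    rw [hτ.liminf_integral_const (by norm_num)]
    norm_num
end
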